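/- For every integer m ≥ 1, the digital net generated by (I_m, P_m, J_m) is a (0,m,3)-net over F₂. -/

import Mathlib

open Matrix

/-- The vector of binary digits of `l` (least significant first). -/
def digitsVec (m l : ℕ) : Fin m → ZMod 2 := fun k => if l.testBit k.val then 1 else 0

/-- The map φ sending a bit vector to a real number in [0,1). -/
noncomputable def phiMap (m : ℕ) (y : Fin m → ZMod 2) : ℝ :=
  ∑ k : Fin m, ((y k).val : ℝ) / 2 ^ (k.val + 1)

/-- The digital net (as a multiset of `2^m` points in `[0,1)^s`) generated by
matrices `C 0, …, C (s-1)`. -/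
noncomputable def digitalNet (m s : ℕ) (C : Fin s → Matrix (Fin m) (Fin m) (ZMod 2)) :
    Multiset (Fin s → ℝ) :=
  (Multiset.range (2 ^ m)).map fun l => fun j => phiMap m ((C j).mulVec (digitsVec m l))

open Classical in
/-- `P` is a `(t,m,s)`-net over `F₂`: every elementary interval of volume `2^{t-m}`
contains exactly `2^t` points of `P`, counted with multiplicity. -/
def IsNet (t m s : ℕ) (P : Multiset (Fin s → ℝ)) : Prop :=
  ∀ d : Fin s → ℕ, (∑ i, d i) = m - t →
    ∀ a : Fin s → ℕ, (∀ i, a i < 2 ^ d i) →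
      (P.countP fun x => ∀ i,
        ((a i : ℝ) / 2 ^ d i ≤ x i ∧ x i < ((a i : ℝ) + 1) / 2 ^ d i)) = 2 ^ t

/-- The anti-diagonal matrix `J_m` over `F₂`. -/
def Jmat (m : ℕ) : Matrix (Fin m) (Fin m) (ZMod 2) :=
  Matrix.of fun i j => if i.val + j.val = m - 1 then 1 else 0

/-- The upper-triangular Pascal matrix `P_m` over `F₂` (0-indexed entry `(i,j)` is
`binom(j,i) mod 2`). -/
def Pmat (m : ℕ) : Matrix (Fin m) (Fin m) (ZMod 2) :=
  Matrix.of fun i j => ((j.val.choose i.val : ℕ) : ZMod 2)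

/-- A matrix is lower triangular. -/
def IsLowerTri {m : ℕ} (L : Matrix (Fin m) (Fin m) (ZMod 2)) : Prop :=
  ∀ i j : Fin m, i < j → L i j = 0

/-!
Membership of the point of `y ∈ F₂ᵐ` in an elementary box with side lengths `2^{-dᵢ}` prescribes
the first `dᵢ` coordinates of `Cᵢ y`. When `∑ dᵢ = m` this is a square linear system, so the
digital net is a `(0,m,s)`-net as soon as only `z = 0` has the first `dᵢ` coordinates of every
`Cᵢ z` equal to zero.

For `(I, P, J)`, read `z` as the polynomial `f = ∑ zⱼ Xʲ`. Then `P z` is the coefficient vector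
of `f(X+1)` and `J` reverses coefficients, so the conditions say `X^{d₀} ∣ f`, `X^{d₁} ∣ f(X+1)`
and `deg f < d₀ + d₁`. Writing `f = X^{d₀} g`, coprimality of `X` and `X+1` gives
`X^{d₁} ∣ g(X+1)`, a polynomial of degree `< d₁`; hence `f = 0`.
-/

open Polynomial Finset

theorem Polynomial.eq_zero_of_X_pow_dvd_of_X_pow_dvd_comp_X_add_one {R : Type*} [CommRing R]
    [IsDomain R] {f : R[X]} {a b : ℕ} (ha : X ^ a ∣ f) (hb : X ^ b ∣ f.comp (X + 1))
    (hdeg : f.degree < ↑(a + b)) : f = 0 := by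
  obtain ⟨g, rfl⟩ := ha
  by_contra hf
  have hg : g ≠ 0 := right_ne_zero_of_mul hf
  have hgb : X ^ b ∣ g.comp (X + 1) := by
    rw [mul_comp, X_pow_comp] at hb
    exact (IsCoprime.pow (⟨-1, 1, by ring⟩ : IsCoprime (X : R[X]) (X + 1))).dvd_of_dvd_mul_left hb
  rw [← C_1] at hgb
  have hgb' := natDegree_le_of_dvd hgb (comp_X_add_C_ne_zero_iff.mpr hg)
  rw [natDegree_comp, natDegree_X_add_C, natDegree_X_pow] at hgb'
  rw [degree_eq_natDegree hf, natDegree_X_pow_mul _ hg, Nat.cast_lt] at hdeg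
  omega

theorem Pmat_mulVec_apply {m : ℕ} (z : Fin m → ZMod 2) (i : Fin m) :
    (Pmat m *ᵥ z) i = ((ofFn m z).comp (X + 1)).coeff i := by
  simp only [ofFn_eq_sum_monomial, Polynomial.sum_comp, monomial_comp, finsetSum_coeff,
    coeff_C_mul, coeff_X_add_one_pow, mulVec, dotProduct, Pmat, of_apply]
  exact sum_congr rfl fun _ _ => mul_comm _ _

theorem Jmat_mulVec {m : ℕ} (z : Fin m → ZMod 2) : Jmat m *ᵥ z = fun k => z k.rev := by
  ext k
  have hrev (j : Fin m) : k.val + j.val = m - 1 ↔ j = k.rev := by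
    rw [Fin.ext_iff, Fin.val_rev]; omega
  simp [mulVec, dotProduct, Jmat, hrev]

theorem eq_zero_of_leading_coords_Pmat_Jmat_eq_zero {m d₀ d₁ d₂ : ℕ} (hd : d₀ + d₁ + d₂ = m)
    {z : Fin m → ZMod 2}
    (h₀ : ∀ k : Fin m, (k : ℕ) < d₀ → z k = 0)
    (h₁ : ∀ k : Fin m, (k : ℕ) < d₁ → (Pmat m *ᵥ z) k = 0)
    (h₂ : ∀ k : Fin m, (k : ℕ) < d₂ → (Jmat m *ᵥ z) k = 0) : z = 0 := by
  refine injective_ofFn m ((eq_zero_of_X_pow_dvd_of_X_pow_dvd_comp_X_add_one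
    (a := d₀) (b := d₁) ?_ ?_ ?_).trans (map_zero _).symm)
  · refine X_pow_dvd_iff.mpr fun k hk => ?_
    rw [ofFn_coeff_eq_val_of_lt z (by omega)]
    exact h₀ _ hk
  · refine X_pow_dvd_iff.mpr fun k hk => ?_
    rw [← h₁ ⟨k, by omega⟩ hk, Pmat_mulVec_apply]
  · refine degree_lt_iff_coeff_zero _ _ |>.mpr fun k hk => ?_
    rcases lt_or_ge k m with hkm | hkm
    · rw [ofFn_coeff_eq_val_of_lt z hkm]
      simpa [Jmat_mulVec] using h₂ (Fin.rev ⟨k, hkm⟩) (by simp only [Fin.val_rev]; omega)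
    · exact ofFn_coeff_eq_zero_of_ge z hkm

theorem phiMap_succ {m : ℕ} (y : Fin (m + 1) → ZMod 2) :
    phiMap (m + 1) y = ((y 0).val + phiMap m (Fin.tail y)) / 2 := by
  simp only [phiMap, Fin.sum_univ_succ, Fin.tail, Fin.val_zero, Fin.val_succ, add_div, sum_div]
  congr 1
  · ring
  · exact sum_congr rfl fun _ _ => by rw [pow_succ, div_div]

theorem phiMap_nonneg {m : ℕ} (y : Fin m → ZMod 2) : 0 ≤ phiMap m y := by
  unfold phiMap; positivity

theorem phiMap_lt_one {m : ℕ} (y : Fin m → ZMod 2) : phiMap m y < 1 := by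
  induction m with
  | zero => simp [phiMap]
  | succ m ih =>
    have hy0 : ((y 0).val : ℝ) ≤ 1 := by exact_mod_cast Nat.le_of_lt_succ (y 0).val_lt
    rw [phiMap_succ]
    linarith [ih (Fin.tail y)]

theorem floor_two_pow_mul_phiMap_lt {m : ℕ} (d : ℕ) (y : Fin m → ZMod 2) :
    ⌊2 ^ d * phiMap m y⌋₊ < 2 ^ d := by
  rw [Nat.floor_lt (mul_nonneg (by positivity) (phiMap_nonneg y))]
  push_cast
  exact mul_lt_of_lt_one_right (by positivity) (phiMap_lt_one y)

theorem floor_two_pow_succ_mul_phiMap_succ {m : ℕ} (d : ℕ) (y : Fin (m + 1) → ZMod 2) :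
    ⌊2 ^ (d + 1) * phiMap (m + 1) y⌋₊ = ⌊2 ^ d * phiMap m (Fin.tail y)⌋₊ + 2 ^ d * (y 0).val := by
  rw [← Nat.floor_add_natCast (mul_nonneg (by positivity) (phiMap_nonneg _)), phiMap_succ]
  congr 1
  push_cast
  ring

theorem eq_of_floor_two_pow_mul_phiMap_eq {m d : ℕ} {y y' : Fin m → ZMod 2}
    (h : ⌊2 ^ d * phiMap m y⌋₊ = ⌊2 ^ d * phiMap m y'⌋₊) (k : Fin m) (hk : (k : ℕ) < d) :
    y k = y' k := by
  induction m generalizing d with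
  | zero => exact k.elim0
  | succ m ih =>
    obtain ⟨d, rfl⟩ : ∃ d', d = d' + 1 := ⟨d - 1, by omega⟩
    rw [floor_two_pow_succ_mul_phiMap_succ, floor_two_pow_succ_mul_phiMap_succ] at h
    have hlt := floor_two_pow_mul_phiMap_lt d (Fin.tail y)
    have hlt' := floor_two_pow_mul_phiMap_lt d (Fin.tail y')
    have hdiv := congrArg (· / 2 ^ d) h
    have hmod := congrArg (· % 2 ^ d) h
    simp only [Nat.add_mul_div_left _ _ (Nat.two_pow_pos d), Nat.div_eq_of_lt hlt,
      Nat.div_eq_of_lt hlt', Nat.add_mul_mod_self_left, Nat.mod_eq_of_lt hlt,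
      Nat.mod_eq_of_lt hlt', zero_add] at hdiv hmod
    induction k using Fin.cases with
    | zero => exact ZMod.val_injective 2 hdiv
    | succ k => exact ih hmod k (by simpa using hk)

theorem div_two_pow_le_and_lt_iff_floor_eq {x : ℝ} (hx : 0 ≤ x) (a d : ℕ) :
    ((a : ℝ) / 2 ^ d ≤ x ∧ x < ((a : ℝ) + 1) / 2 ^ d) ↔ ⌊2 ^ d * x⌋₊ = a := by
  rw [Nat.floor_eq_iff (by positivity), div_le_iff₀' (by positivity), lt_div_iff₀' (by positivity)]

theorem digitsVec_injOn (m : ℕ) : Set.InjOn (digitsVec m) (range (2 ^ m) : Set ℕ) := by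
  intro l hl l' hl' h
  refine Nat.eq_of_testBit_eq fun i => ?_
  by_cases him : i < m
  · have := congrFun h ⟨i, him⟩
    simp only [digitsVec] at this
    split_ifs at this <;> simp_all
  · have hpow : 2 ^ m ≤ 2 ^ i := Nat.pow_le_pow_right two_pos (by omega)
    rw [coe_range, Set.mem_Iio] at hl hl'
    rw [Nat.testBit_eq_false_of_lt (hl.trans_le hpow),
      Nat.testBit_eq_false_of_lt (hl'.trans_le hpow)]

theorem map_digitsVec_range (m : ℕ) :
    (Multiset.range (2 ^ m)).map (digitsVec m) = (univ : Finset (Fin m → ZMod 2)).val := by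
  have himage : (range (2 ^ m)).image (digitsVec m) = univ := by
    refine eq_univ_of_card _ ?_
    rw [card_image_of_injOn (digitsVec_injOn m), card_range]
    simp
  rw [← himage, image_val_of_injOn (digitsVec_injOn m)]
  rfl

theorem card_filter_eq_one_of_injective {α β : Type*} [Fintype α] [DecidableEq β] {f : α → β}
    (hf : Function.Injective f) {S : Finset β} (hfS : ∀ x, f x ∈ S) (hS : #S ≤ Fintype.card α)
    {b : β} (hb : b ∈ S) : #{x | f x = b} = 1 := by
  have himage : univ.image f = S :=
    eq_of_subset_of_card_le (fun _ hy => by obtain ⟨x, -, rfl⟩ := mem_image.mp hy; exact hfS x)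
      (by rwa [card_image_of_injective _ hf])
  obtain ⟨x, -, rfl⟩ := mem_image.mp (himage ▸ hb)
  exact card_eq_one.mpr ⟨x, by ext; simp [hf.eq_iff]⟩

theorem digitalNet_eq_map_univ (m s : ℕ) (C : Fin s → Matrix (Fin m) (Fin m) (ZMod 2)) :
    digitalNet m s C =
      (univ : Finset (Fin m → ZMod 2)).val.map fun y j => phiMap m (C j *ᵥ y) := by
  rw [digitalNet, ← map_digitsVec_range, Multiset.map_map]
  rfl

theorem isNet_zero_digitalNet_of_forall_eq_zero {m s : ℕ}
    (C : Fin s → Matrix (Fin m) (Fin m) (ZMod 2))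
    (hC : ∀ d : Fin s → ℕ, ∑ i, d i = m → ∀ z : Fin m → ZMod 2,
      (∀ i (k : Fin m), (k : ℕ) < d i → (C i *ᵥ z) k = 0) → z = 0) :
    IsNet 0 m s (digitalNet m s C) := by
  intro d hd a ha
  rw [Nat.sub_zero] at hd
  let T : (Fin m → ZMod 2) → Fin s → ℕ := fun y i => ⌊2 ^ d i * phiMap m (C i *ᵥ y)⌋₊
  have hT : Function.Injective T := by
    intro y y' h
    refine sub_eq_zero.mp (hC d hd _ fun i k hk => ?_)
    rw [mulVec_sub, Pi.sub_apply, sub_eq_zero]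
    exact eq_of_floor_two_pow_mul_phiMap_eq (congrFun h i) k hk
  let S : Finset (Fin s → ℕ) := Fintype.piFinset fun i => range (2 ^ d i)
  have hTS (y : Fin m → ZMod 2) : T y ∈ S :=
    Fintype.mem_piFinset.mpr fun i => mem_range.mpr (floor_two_pow_mul_phiMap_lt _ _)
  have hS : #S = Fintype.card (Fin m → ZMod 2) := by
    simp [S, Fintype.card_piFinset, prod_pow_eq_pow_sum, hd]
  calc _ = #{y | T y = a} := by
        rw [digitalNet_eq_map_univ, Multiset.countP_map]
        congr 1
        ext y
        simp [T, funext_iff, div_two_pow_le_and_lt_iff_floor_eq (phiMap_nonneg _)]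
    _ = 1 := card_filter_eq_one_of_injective hT hTS hS.le
        (Fintype.mem_piFinset.mpr fun i => mem_range.mpr (ha i))

theorem stmt4_general (m : ℕ) :
    IsNet 0 m 3 (digitalNet m 3 ![1, Pmat m, Jmat m]) := by
  refine isNet_zero_digitalNet_of_forall_eq_zero _ fun d hd z hz => ?_
  rw [Fin.sum_univ_three] at hd
  exact eq_zero_of_leading_coords_Pmat_Jmat_eq_zero hd (by simpa using hz 0) (hz 1) (hz 2)

theorem stmt4 (m : ℕ) (hm : 1 ≤ m) :
    IsNet 0 m 3 (digitalNet m 3 ![1, Pmat m, Jmat m]) :=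
  stmt4_general m
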